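/- arXiv:2209.07988 — 2 statements merged into one kernel-verified Lean document; each statement's English description precedes it below -/
import Mathlib

section
/- For all d > 0, λ(d) = (1+1/d)^{1/d} / Γ(1+1/d) ≥ 1. -/
theorem lambda_ge_one (d : ℝ) (hd : 0 < d) :
    1 ≤ ((1 + 1 / d) ^ (1 / d)) / Real.Gamma (1 + 1 / d) := by
  set s : ℝ := 1 / d with hs
  have hs0 : 0 < s := one_div_pos.mpr hd
  have h1s : (0:ℝ) < 1 + s := by linarith
  have hG : 0 < Real.Gamma (1 + s) := Real.Gamma_pos_of_pos h1s
  rw [le_div_iff₀ hG, one_mul]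
  -- slope inequality from convexity of log Gamma
  have hconv := Real.convexOn_log_Gamma
  have hslope := hconv.slope_mono_adjacent (x := 1) (y := 1 + s) (z := 2 + s)
    (Set.mem_Ioi.mpr one_pos) (Set.mem_Ioi.mpr (by linarith)) (by linarith) (by linarith)
  have hrec : Real.Gamma (2 + s) = (1 + s) * Real.Gamma (1 + s) := by
    have := Real.Gamma_add_one (show (1:ℝ) + s ≠ 0 by positivity)
    rw [show (2:ℝ) + s = 1 + s + 1 by ring, this]
  have hG1 : Real.Gamma (1 : ℝ) = 1 := Real.Gamma_one
  have hlog : Real.log (Real.Gamma (1 + s)) ≤ s * Real.log (1 + s) := by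
    have h2 : ((Real.log ∘ Real.Gamma) (1 + s) - (Real.log ∘ Real.Gamma) 1) / (1 + s - 1)
        ≤ ((Real.log ∘ Real.Gamma) (2 + s) - (Real.log ∘ Real.Gamma) (1 + s)) / (2 + s - (1 + s)) :=
      hslope
    simp only [Function.comp_apply, hG1, Real.log_one, sub_zero] at h2
    have h3 : Real.log (Real.Gamma (2 + s)) - Real.log (Real.Gamma (1 + s)) = Real.log (1 + s) := by
      rw [hrec, Real.log_mul (by positivity) (ne_of_gt hG)]; ring
    rw [show (1:ℝ) + s - 1 = s by ring, show (2:ℝ) + s - (1 + s) = 1 by ring, div_one, h3] at h2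
    calc Real.log (Real.Gamma (1 + s)) = (Real.log (Real.Gamma (1 + s)) / s) * s := by
          field_simp
      _ ≤ Real.log (1 + s) * s := by
          exact mul_le_mul_of_nonneg_right h2 hs0.le
      _ = s * Real.log (1 + s) := by ring
  have := Real.exp_le_exp.mpr hlog
  rw [Real.rpow_def_of_pos h1s, mul_comm]; rwa [Real.exp_log hG] at this
end

section
/- For the exponential distribution with rate 1 (F(x) = 1 - e^{-x}), the optimal-algorithm recurrence G(1) = 1, G(n) = ∫_0^{G(n-1)} e^{-u} du = 1 - e^{-G(n-1)}, together with β_n = 1/n, satisfies G(n) ≤ 2/n for all n ≥ 1. -/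
/-!
For `x ≥ 0` we have `1 - e^{-x} ≤ 2x / (x + 2)`, i.e. `tanh (x/2) ≤ x/2`: for `x < 2` this is the
first term of the series `log ((1 + t) / (1 - t)) = 2 (t + t³/3 + …)` at `t = x/2`. If `x ≤ 2/n`, then
`2x / (x + 2) ≤ 2/(n+1)`, so the bound `G n ≤ 2/n` passes from each step of the recurrence to the next.
-/

open Real

lemma Real.exp_two_mul_le_one_add_div_one_sub {t : ℝ} (ht₀ : 0 ≤ t) (ht₁ : t < 1) :
    exp (2 * t) ≤ (1 + t) / (1 - t) := by
  have hlog : 2 * t ≤ log ((1 + t) / (1 - t)) := by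
    have h := sum_range_le_log_div ht₀ ht₁ 1
    norm_num at h
    linarith
  calc exp (2 * t) ≤ exp (log ((1 + t) / (1 - t))) := exp_le_exp.mpr hlog
    _ = (1 + t) / (1 - t) := exp_log (div_pos (by linarith) (by linarith))

lemma Real.one_sub_exp_neg_le_two_mul_div {x : ℝ} (hx : 0 ≤ x) :
    1 - exp (-x) ≤ 2 * x / (x + 2) := by
  rw [le_div_iff₀ (by linarith)]
  rcases le_or_gt 2 x with hx₂ | hx₂
  · nlinarith [exp_pos (-x)]
  · have h := exp_two_mul_le_one_add_div_one_sub (t := x / 2) (by linarith) (by linarith)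
    rw [show 2 * (x / 2) = x by ring, le_div_iff₀ (by linarith)] at h
    have hinv : exp x * exp (-x) = 1 := by rw [← exp_add, add_neg_cancel, exp_zero]
    nlinarith [exp_pos (-x)]

lemma Real.one_sub_exp_neg_le_two_div_add_one {x a : ℝ} (hx : 0 ≤ x) (ha : 0 ≤ a)
    (hxa : x * a ≤ 2) : 1 - exp (-x) ≤ 2 / (a + 1) :=
  calc 1 - exp (-x) ≤ 2 * x / (x + 2) := one_sub_exp_neg_le_two_mul_div hx
    _ ≤ 2 / (a + 1) := by
      rw [div_le_div_iff₀ (by linarith) (by linarith)]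
      linarith

theorem exponential_ratio_le_two
    (G : ℕ → ℝ) (hG1 : G 1 = 1)
    (hrec : ∀ n, 2 ≤ n → G n = 1 - Real.exp (-(G (n - 1)))) :
    ∀ n, 1 ≤ n → G n ≤ 2 / n := by
  suffices h : ∀ n, 1 ≤ n → 0 ≤ G n ∧ G n ≤ 2 / n from fun n hn ↦ (h n hn).2
  intro n hn
  induction n, hn using Nat.le_induction with
  | base => norm_num [hG1]
  | succ n hn ih =>
    obtain ⟨hG₀, hG₂⟩ := ih
    have hn₀ : (0 : ℝ) < n := by exact_mod_cast hn
    rw [hrec (n + 1) (by omega), Nat.add_sub_cancel]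
    refine ⟨by simpa using exp_le_one_iff.mpr (neg_nonpos.mpr hG₀), ?_⟩
    push_cast
    exact one_sub_exp_neg_le_two_div_add_one hG₀ hn₀.le ((le_div_iff₀ hn₀).mp hG₂)
end
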